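/- arXiv:1806.11325 — 6 statements merged into one kernel-verified Lean document; each statement's English description precedes it below -/
import Mathlib

section
/- Let G be a strongly regular graph with parameters (v,k,λ,μ) whose smallest eigenvalue lies in the interval [−3,−2), and suppose G is integrable, i.e. there exists a matrix N with integer entries such that NᵀN = A(G) + 3·I. If μ ≥ 10, then 3 divides v and G is isomorphic to the complete multipartite graph K_{(v/3)×3} with v/3 parts each of size 3. -/
/-!
Write `M = Nᵀ`. Its rows are integer vectors of norm 3, so their entries lie in `{-1, 0, 1}` and
at most three are nonzero, and `M u ⬝ᵥ M w` is `1` on edges and `0` on non-edges. Distinct rows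
are never congruent mod 2: the two vertices would be adjacent twins, which forces `λ = k - 1` and
then `G = ⊤`. Hence two distinct rows never agree (carry equal nonzero entries) in two
coordinates. Pigeonholing the `μ ≥ 10` common neighbours of a non-edge then shows, first, that
any two distinct rows agree somewhere and, second, that four rows agree in some coordinate `s`;
a row differing from them at `s` would have to agree with each of them in a different coordinate
of its support, so column `s` is a constant `c = ±1`. The sum `σ` of the rows has `σ s = v c` and
`σ ⬝ᵥ σ = 1 ⬝ᵥ (A + 3) *ᵥ 1 = v (k + 3)`, whence `v ≤ k + 3`. Conversely `θ ≥ -(v - k)`, as the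
Laplacian of the complement is positive semidefinite, so `θ < -2` gives `v ≥ k + 3`. Finally, in
a strongly regular graph with `v = k + 3` and `μ ≥ 2` non-adjacency is transitive (otherwise
`k = μ + 1`, against `k (k - λ - 1) = 2 μ`), so `G` is complete multipartite with parts of size
`v - k = 3`.
-/

open Matrix Finset

namespace SimpleGraph

section Finite

variable {V : Type*} [Fintype V] {G : SimpleGraph V} [DecidableRel G.Adj] {n k ℓ μ : ℕ}

theorem IsSRGWith.eq_top_of_adj_of_twins (h : G.IsSRGWith n k ℓ μ) (hμ : μ ≠ 0) {x z : V}
    (hxz : G.Adj x z) (htw : ∀ w, w ≠ x → w ≠ z → (G.Adj x w ↔ G.Adj z w)) : G = ⊤ := by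
  classical
  have hunion : #(G.neighborFinset x ∪ G.neighborFinset z) = k + 1 := by
    have : G.neighborFinset x ∪ G.neighborFinset z = insert x (G.neighborFinset x) := by
      ext w
      by_cases hwx : w = x
      · simp [hwx, hxz.symm]
      by_cases hwz : w = z
      · simp [hwz, hxz]
      simp [hwx, htw w hwx hwz]
    rw [this, card_insert_of_notMem (by simp), card_neighborFinset_eq_degree, h.regular x]
  have hsub : ∀ a w, G.Adj a w → G.neighborFinset w ⊆ insert a (G.neighborFinset a) := by
    intro a w haw
    have hle : #(G.neighborFinset a ∪ G.neighborFinset w) ≤ #(insert a (G.neighborFinset a)) := by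
      rw [h.card_neighborFinset_union_of_adj haw, ← h.card_neighborFinset_union_of_adj hxz,
        hunion, card_insert_of_notMem (by simp), card_neighborFinset_eq_degree, h.regular a]
    have heq := eq_of_subset_of_card_le
      (insert_subset (by simpa using haw.symm) subset_union_left) hle
    exact heq ▸ subset_union_right
  ext a b
  refine ⟨Adj.ne, fun (hab : a ≠ b) => ?_⟩
  by_contra hnab
  have hcard : 0 < Fintype.card (G.commonNeighbors a b) := h.of_not_adj hab hnab ▸ hμ.bot_lt
  obtain ⟨⟨w, haw, hbw⟩⟩ := Fintype.card_pos_iff.1 hcard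
  have := hsub a w haw (by simpa using hbw.symm)
  simp [hab.symm, hnab] at this

theorem IsSRGWith.natCard_not_adj (h : G.IsSRGWith n k ℓ μ) (x : V) :
    Nat.card {y // ¬ G.Adj x y} = n - k := by
  rw [Nat.card_eq_fintype_card, Fintype.card_subtype_compl, Fintype.card_subtype,
    ← G.neighborFinset_eq_filter, G.card_neighborFinset_eq_degree, h.regular x, h.card]

theorem IsSRGWith.isCompleteMultipartite (h : G.IsSRGWith n k ℓ μ) (hn : n = k + 3)
    (hμ : 2 ≤ μ) : G.IsCompleteMultipartite := by
  classical
  refine ⟨fun x y z hxy hyz hxz => ?_⟩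
  have hyx : y ≠ x := by rintro rfl; exact hyz hxz
  have hyz' : y ≠ z := by rintro rfl; exact hxy hxz
  have hnonadj : Gᶜ.neighborFinset y = {x, z} := by
    refine (eq_of_subset_of_card_le (s := {x, z}) ?_ ?_).symm
    · intro w hw
      simp only [mem_insert, mem_singleton] at hw
      rcases hw with rfl | rfl <;> simp [hyx, hyz', hyz, G.adj_comm y, hxy]
    · rw [card_neighborFinset_eq_degree, h.compl_is_regular y, card_pair hxz.ne]
      omega
  have hunion : G.neighborFinset x ∪ G.neighborFinset y = insert z (G.neighborFinset y) := by
    ext w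
    by_cases hwz : w = z
    · simp [hwz, hxz]
    by_cases hyw : G.Adj y w
    · simp [hyw]
    suffices ¬ G.Adj x w by simp [hwz, hyw, this]
    by_cases hwy : w = y
    · exact hwy ▸ hxy
    have : w ∈ Gᶜ.neighborFinset y := by simp [Ne.symm hwy, hyw]
    simp only [hnonadj, mem_insert, mem_singleton, hwz, or_false] at this
    exact this ▸ G.loopless.irrefl x
  have hk : k + 1 = 2 * k - μ := by
    rw [← h.card_neighborFinset_union_of_not_adj hyx.symm hxy, hunion,
      card_insert_of_notMem (by simpa using hyz), card_neighborFinset_eq_degree, h.regular y]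
  have hpe := h.param_eq G (by omega)
  rw [show n - k - 1 = 2 by omega, show k = μ + 1 by omega] at hpe
  rcases hj : μ + 1 - ℓ - 1 with _ | _ | j <;> rw [hj] at hpe <;> nlinarith

theorem neg_add_one_le_of_compl_isRegularOfDegree [DecidableEq V] {d : ℕ}
    (hd : Gᶜ.IsRegularOfDegree d) {x : V → ℝ} (hx : x ≠ 0) {θ : ℝ}
    (hθ : G.adjMatrix ℝ *ᵥ x = θ • x) : -(d + 1 : ℝ) ≤ θ := by
  have hcompl : Gᶜ.adjMatrix ℝ = of 1 - 1 - G.adjMatrix ℝ := by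
    rw [← adjMatrix_completeGraph_eq_of_one_sub_one,
      ← G.adjMatrix_add_compl_adjMatrix_eq_adjMatrix_completeGraph ℝ,
      compl_adjMatrix_eq_adjMatrix_compl, add_sub_cancel_left]
  have hlap : 0 ≤ x ⬝ᵥ Gᶜ.lapMatrix ℝ *ᵥ x := by
    simpa using (posSemidef_lapMatrix ℝ Gᶜ).dotProduct_mulVec_nonneg x
  have hdeg : x ⬝ᵥ Gᶜ.degMatrix ℝ *ᵥ x = d * (x ⬝ᵥ x) := by
    rw [dotProduct_mulVec_degMatrix, dotProduct, mul_sum]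
    simp [hd.degree_eq, mul_assoc]
  have hall : x ⬝ᵥ of 1 *ᵥ x = (∑ i, x i) ^ 2 := by
    simp [dotProduct, mulVec, sq, sum_mul, mul_comm]
  have hnorm : 0 < x ⬝ᵥ x :=
    (sum_nonneg fun i _ => mul_self_nonneg (x i)).lt_of_ne' (dotProduct_self_eq_zero.not.2 hx)
  rw [lapMatrix, sub_mulVec, dotProduct_sub, hdeg, hcompl, sub_mulVec, sub_mulVec, hθ,
    dotProduct_sub, dotProduct_sub, hall, one_mulVec, dotProduct_smul, smul_eq_mul] at hlap
  nlinarith [sq_nonneg (∑ i, x i)]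

end Finite

def completeMultipartiteGraph.congr {ι ι' : Type*} {V : ι → Type*} {W : ι' → Type*} (e : ι ≃ ι')
    (f : ∀ i, V i ≃ W (e i)) : completeMultipartiteGraph V ≃g completeMultipartiteGraph W where
  toEquiv := e.sigmaCongr f
  map_rel_iff' := not_congr e.injective.eq_iff

theorem IsCompleteMultipartite.dvd_and_nonempty_iso {α : Type*} [Finite α] {G : SimpleGraph α}
    (h : G.IsCompleteMultipartite) {t : ℕ} (ht : ∀ x, Nat.card {y // ¬ G.Adj x y} = t)
    (ht0 : 0 < t) :
    t ∣ Nat.card α ∧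
      Nonempty (G ≃g completeMultipartiteGraph (fun _ : Fin (Nat.card α / t) => Fin t)) := by
  have := Fintype.ofFinite (Quotient h.setoid)
  have hcard : Nat.card α = Nat.card (Quotient h.setoid) * t := by
    rw [Nat.card_congr h.iso.toEquiv, Nat.card_sigma, sum_congr rfl fun c _ => ht c.out,
      sum_const, card_univ, smul_eq_mul, Nat.card_eq_fintype_card]
  have hq : Nat.card (Quotient h.setoid) = Nat.card α / t := by
    rw [hcard, Nat.mul_div_cancel _ ht0]
  exact ⟨hcard ▸ dvd_mul_left _ _, ⟨h.iso.trans <| completeMultipartiteGraph.congr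
    (Finite.equivFinOfCardEq hq) fun c => Finite.equivFinOfCardEq (ht c.out)⟩⟩

end SimpleGraph

theorem Int.mul_eq_one_of_mul_eq_one_of_mul_eq_one {a b c : ℤ} (ha : a * c = 1) (hb : b * c = 1) :
    a * b = 1 := by
  rwa [Int.eq_of_mul_eq_one hb]

section Norm3Rep

variable {ι V : Type*} [Fintype ι] [DecidableEq V]

def SimpleGraph.IsNorm3Rep (G : SimpleGraph V) [DecidableRel G.Adj] (M : Matrix V ι ℤ) : Prop :=
  M * Mᵀ = G.adjMatrix ℤ + 3 • 1

namespace SimpleGraph.IsNorm3Rep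

variable {G : SimpleGraph V} [DecidableRel G.Adj] {M : Matrix V ι ℤ} {n k ℓ μ : ℕ} {u w : V}

theorem dotProduct_eq (hM : G.IsNorm3Rep M) (u w : V) :
    M u ⬝ᵥ M w = (G.adjMatrix ℤ + 3 • 1 : Matrix V V ℤ) u w := by
  rw [← hM]
  rfl

theorem dotProduct_self (hM : G.IsNorm3Rep M) (u : V) : M u ⬝ᵥ M u = 3 := by
  rw [hM.dotProduct_eq, Matrix.add_apply, Matrix.smul_apply, one_apply_eq]
  simp

theorem dotProduct_of_ne (hM : G.IsNorm3Rep M) (h : u ≠ w) :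
    M u ⬝ᵥ M w = if G.Adj u w then 1 else 0 := by
  rw [hM.dotProduct_eq, Matrix.add_apply, Matrix.smul_apply, one_apply_ne h]
  simp

theorem abs_le_one (hM : G.IsNorm3Rep M) (u : V) (i : ι) : |M u i| ≤ 1 := by
  have : M u i * M u i ≤ 3 :=
    hM.dotProduct_self u ▸ single_le_sum (fun j _ => mul_self_nonneg (M u j)) (mem_univ i)
  rw [abs_le]
  constructor <;> nlinarith

theorem mul_self_eq_one (hM : G.IsNorm3Rep M) {i : ι} (h : M u i ≠ 0) : M u i * M u i = 1 := by
  have := hM.abs_le_one u i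
  rw [abs_le] at this
  rcases (by omega : M u i = 1 ∨ M u i = -1) with h1 | h1 <;> simp [h1]

theorem card_support_le (hM : G.IsNorm3Rep M) (u : V) : #{i | M u i ≠ 0} ≤ 3 := by
  have : (#{i | M u i ≠ 0} : ℤ) ≤ M u ⬝ᵥ M u := calc
    (#{i | M u i ≠ 0} : ℤ) = ∑ i with M u i ≠ 0, M u i * M u i := by
      rw [sum_congr rfl fun i hi => hM.mul_self_eq_one (mem_filter.1 hi).2]
      simp
    _ ≤ M u ⬝ᵥ M u := sum_le_sum_of_subset_of_nonneg (subset_univ _)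
      fun i _ _ => mul_self_nonneg (M u i)
  rw [hM.dotProduct_self] at this
  omega

theorem exists_mul_eq_one (hM : G.IsNorm3Rep M) (h0 : 0 ≤ M u ⬝ᵥ M w)
    (hne : ∃ i, M u i * M w i ≠ 0) : ∃ i, M u i * M w i = 1 := by
  by_contra! h1
  obtain ⟨i, hi⟩ := hne
  have hle : ∀ j, M u j * M w j ≤ 0 := fun j => by
    have hb := abs_mul (M u j) (M w j) ▸
      mul_le_one₀ (hM.abs_le_one u j) (abs_nonneg _) (hM.abs_le_one w j)
    rw [abs_le] at hb
    have := h1 j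
    omega
  exact hi ((sum_eq_zero_iff_of_nonpos fun j _ => hle j).1
    (le_antisymm (sum_nonpos fun j _ => hle j) h0) i (mem_univ i))

theorem exists_mul_eq_one_of_adj (hM : G.IsNorm3Rep M) (h : G.Adj u w) :
    ∃ i, M u i * M w i = 1 := by
  have hdot : M u ⬝ᵥ M w = 1 := by simp [hM.dotProduct_of_ne h.ne, h]
  obtain ⟨i, -, hi⟩ := exists_ne_zero_of_sum_ne_zero (hdot ▸ one_ne_zero : M u ⬝ᵥ M w ≠ 0)
  exact hM.exists_mul_eq_one (by omega) ⟨i, hi⟩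

variable [Fintype V]

theorem eq_of_modEq_two (hM : G.IsNorm3Rep M) (hsrg : G.IsSRGWith n k ℓ μ) (hμ : μ ≠ 0)
    (hG : G ≠ ⊤) (h : ∀ i, M u i ≡ M w i [ZMOD 2]) : u = w := by
  by_contra hne
  have hdot : ∀ y, M y ⬝ᵥ M u ≡ M y ⬝ᵥ M w [ZMOD 2] := fun y =>
    Int.ModEq.sum fun i _ => (h i).mul_left _
  have hadj : G.Adj u w := by
    have := hdot u
    rw [hM.dotProduct_self, hM.dotProduct_of_ne hne] at this
    by_contra hnadj
    simp [hnadj, Int.ModEq] at this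
  refine hG (hsrg.eq_top_of_adj_of_twins hμ hadj fun y hyu hyw => ?_)
  have := hdot y
  rw [hM.dotProduct_of_ne hyu, hM.dotProduct_of_ne hyw] at this
  rw [G.adj_comm u, G.adj_comm w]
  split_ifs at this <;> simp_all [Int.ModEq]

theorem eq_of_mul_eq_one_of_mul_eq_one (hM : G.IsNorm3Rep M) (hsrg : G.IsSRGWith n k ℓ μ)
    (hμ : μ ≠ 0) (hG : G ≠ ⊤) {s t : ι} (hst : s ≠ t) (hs : M u s * M w s = 1)
    (ht : M u t * M w t = 1) : u = w := by
  classical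
  by_contra hne
  refine hne (hM.eq_of_modEq_two hsrg hμ hG fun i => ?_)
  by_cases his : i = s
  · rw [his, Int.eq_of_mul_eq_one hs]
  by_cases hit : i = t
  · rw [hit, Int.eq_of_mul_eq_one ht]
  -- `∑ j, (M u j + M w j) ^ 2 = 6 + 2 (M u ⬝ᵥ M w) ≤ 8`, and `s`, `t` already contribute `4 + 4`.
  let f i := (M u i + M w i) ^ 2
  have hsum : ∑ j, f j ≤ 8 := by
    have : ∑ j, f j = M u ⬝ᵥ M u + 2 * (M u ⬝ᵥ M w) + M w ⬝ᵥ M w := by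
      simp only [f, dotProduct, mul_sum, ← sum_add_distrib]
      exact sum_congr rfl fun j _ => by ring
    rw [this, hM.dotProduct_self, hM.dotProduct_self, hM.dotProduct_of_ne hne]
    split_ifs <;> norm_num
  have hf : ∀ j, M u j * M w j = 1 → f j = 4 := fun j hj => by
    rcases Int.eq_one_or_neg_one_of_mul_eq_one' hj with ⟨h1, h2⟩ | ⟨h1, h2⟩ <;>
      simp [f, h1, h2]
  have h3 : ∑ j ∈ {i, s, t}, f j ≤ ∑ j, f j :=
    sum_le_sum_of_subset_of_nonneg (subset_univ _) fun j _ _ => sq_nonneg _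
  rw [sum_insert (by simp [his, hit]), sum_pair hst, hf s hs, hf t ht] at h3
  have hfi : f i = 0 := by linarith [sq_nonneg (M u i + M w i)]
  have : M u i + M w i = 0 := (pow_eq_zero_iff two_ne_zero).1 hfi
  exact Int.modEq_iff_dvd.2 ⟨-M u i, by linarith⟩

theorem exists_mul_ne_zero (hM : G.IsNorm3Rep M) (hsrg : G.IsSRGWith n k ℓ μ) (hμ : 10 ≤ μ)
    (hG : G ≠ ⊤) (hne : u ≠ w) : ∃ i, M u i * M w i ≠ 0 := by
  by_contra! h
  have hnadj : ¬ G.Adj u w := fun hadj => by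
    simpa [dotProduct, h, hadj] using hM.dotProduct_of_ne hne
  have : μ ≤ 3 * 3 := calc
    μ = #(G.commonNeighbors u w).toFinset := by rw [Set.toFinset_card, hsrg.of_not_adj hne hnadj]
    _ ≤ #(({i | M u i ≠ 0} : Finset ι) ×ˢ ({j | M w j ≠ 0} : Finset ι)) := by
      refine card_le_card_of_forall_subsingleton
        (r := fun y p => M y p.1 * M u p.1 = 1 ∧ M y p.2 * M w p.2 = 1) (fun y hy => ?_) ?_
      · simp only [Set.mem_toFinset, mem_commonNeighbors] at hy
        obtain ⟨i, hi⟩ := hM.exists_mul_eq_one_of_adj hy.1.symm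
        obtain ⟨j, hj⟩ := hM.exists_mul_eq_one_of_adj hy.2.symm
        exact ⟨(i, j), by simp [right_ne_zero_of_mul_eq_one hi, right_ne_zero_of_mul_eq_one hj],
          hi, hj⟩
      · rintro ⟨i, j⟩ hp y ⟨-, hyi, hyj⟩ y' ⟨-, hy'i, hy'j⟩
        simp only [mem_product, mem_filter, mem_univ, true_and] at hp
        have hij : i ≠ j := by
          rintro rfl
          exact mul_ne_zero hp.1 hp.2 (h i)
        exact hM.eq_of_mul_eq_one_of_mul_eq_one hsrg (by omega) hG hij
          (Int.mul_eq_one_of_mul_eq_one_of_mul_eq_one hyi hy'i)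
          (Int.mul_eq_one_of_mul_eq_one_of_mul_eq_one hyj hy'j)
    _ ≤ 3 * 3 := card_product _ _ ▸ Nat.mul_le_mul (hM.card_support_le u) (hM.card_support_le w)
  omega

theorem exists_mul_eq_one_of_ne (hM : G.IsNorm3Rep M) (hsrg : G.IsSRGWith n k ℓ μ)
    (hμ : 10 ≤ μ) (hG : G ≠ ⊤) (hne : u ≠ w) : ∃ i, M u i * M w i = 1 :=
  hM.exists_mul_eq_one (by rw [hM.dotProduct_of_ne hne]; split_ifs <;> norm_num)
    (hM.exists_mul_ne_zero hsrg hμ hG hne)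

theorem apply_eq_of_three_lt_card (hM : G.IsNorm3Rep M) (hsrg : G.IsSRGWith n k ℓ μ)
    (hμ : 10 ≤ μ) (hG : G ≠ ⊤) {x : V} {s : ι} (hxs : M x s ≠ 0)
    (hW : 3 < #{w | M w s = M x s}) (u : V) : M u s = M x s := by
  by_contra hu
  have : #{w | M w s = M x s} ≤ #{i | M u i ≠ 0} := by
    refine card_le_card_of_forall_subsingleton (r := fun w i => M w i * M u i = 1)
      (fun w hw => ?_) (fun i _ w hw w' hw' => ?_)
    · obtain ⟨i, hi⟩ := hM.exists_mul_eq_one_of_ne hsrg hμ hG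
        (show w ≠ u by rintro rfl; exact hu (mem_filter.1 hw).2)
      exact ⟨i, by simp [right_ne_zero_of_mul_eq_one hi], hi⟩
    · have hws : M w s = M x s := by simpa using hw.1
      have hw's : M w' s = M x s := by simpa using hw'.1
      have hsi : s ≠ i := by
        rintro rfl
        exact hu (Int.eq_of_mul_eq_one (hws ▸ hw.2)).symm
      exact hM.eq_of_mul_eq_one_of_mul_eq_one hsrg (by omega) hG hsi
        (by rw [hws, hw's, hM.mul_self_eq_one hxs])
        (Int.mul_eq_one_of_mul_eq_one_of_mul_eq_one hw.2 hw'.2)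
  linarith [hM.card_support_le u]

theorem exists_forall_apply_eq (hM : G.IsNorm3Rep M) (hsrg : G.IsSRGWith n k ℓ μ)
    (hμ : 10 ≤ μ) (hG : G ≠ ⊤) : ∃ s c, c * c = 1 ∧ ∀ u, M u s = c := by
  obtain ⟨x, y, hxy, hnadj⟩ := ne_top_iff_exists_not_adj.1 hG
  obtain ⟨s, hs, hW⟩ : ∃ s ∈ ({i | M x i ≠ 0} : Finset ι), 3 < #{w | M w s = M x s} := by
    by_contra! h
    have : μ ≤ 3 * 3 := calc
      μ = #(G.commonNeighbors x y).toFinset := by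
        rw [Set.toFinset_card, hsrg.of_not_adj hxy hnadj]
      _ ≤ #(({i | M x i ≠ 0} : Finset ι).biUnion fun s => {w | M w s = M x s}) := by
        refine card_le_card fun w hw => ?_
        simp only [Set.mem_toFinset, mem_commonNeighbors] at hw
        obtain ⟨i, hi⟩ := hM.exists_mul_eq_one_of_adj hw.1.symm
        simp only [mem_biUnion, mem_filter, mem_univ, true_and]
        exact ⟨i, right_ne_zero_of_mul_eq_one hi, Int.eq_of_mul_eq_one hi⟩
      _ ≤ ∑ s ∈ {i | M x i ≠ 0}, #{w | M w s = M x s} := card_biUnion_le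
      _ ≤ #{i | M x i ≠ 0} * 3 := by simpa using sum_le_card_nsmul _ _ 3 h
      _ ≤ 3 * 3 := Nat.mul_le_mul_right _ (hM.card_support_le x)
    omega
  have hxs : M x s ≠ 0 := (mem_filter.1 hs).2
  exact ⟨s, M x s, hM.mul_self_eq_one hxs, hM.apply_eq_of_three_lt_card hsrg hμ hG hxs hW⟩

theorem card_le_add_three (hM : G.IsNorm3Rep M) (hreg : G.IsRegularOfDegree k) {s : ι} {c : ℤ}
    (hc : c * c = 1) (hcol : ∀ u, M u s = c) : Fintype.card V ≤ k + 3 := by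
  set σ := Mᵀ *ᵥ 1
  have hσσ : σ ⬝ᵥ σ = Fintype.card V * (k + 3) := calc
    σ ⬝ᵥ σ = 1 ⬝ᵥ (M * Mᵀ) *ᵥ 1 := by
      rw [← mulVec_mulVec, dotProduct_mulVec (1 : V → ℤ) M, ← mulVec_transpose]
    _ = Fintype.card V * (k + 3) := by
      have hrow : (G.adjMatrix ℤ + 3 • 1 : Matrix V V ℤ) *ᵥ 1 = fun _ => (k + 3 : ℤ) := by
        ext u
        simp [add_mulVec, adjMatrix_mulVec_apply, hreg.degree_eq]
      rw [hM, hrow]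
      simp [dotProduct]
  have hσs : σ s = Fintype.card V * c := by simp [σ, mulVec, dotProduct, hcol]
  have hle : σ s * σ s ≤ σ ⬝ᵥ σ := single_le_sum (fun i _ => mul_self_nonneg (σ i)) (mem_univ s)
  rw [hσs, hσσ, mul_mul_mul_comm, hc, mul_one] at hle
  rcases (Fintype.card V).eq_zero_or_pos with h0 | hpos
  · omega
  · exact_mod_cast le_of_mul_le_mul_left hle (by exact_mod_cast hpos)

end SimpleGraph.IsNorm3Rep

end Norm3Rep

def IsSmallestEigenval {V : Type} [Fintype V] (A : Matrix V V ℝ) (θ : ℝ) : Prop :=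
  (∃ x : V → ℝ, x ≠ 0 ∧ A.mulVec x = θ • x) ∧
    ∀ μ : ℝ, (∃ x : V → ℝ, x ≠ 0 ∧ A.mulVec x = μ • x) → θ ≤ μ

open scoped Classical in
theorem stmt_0_general {V : Type} [Fintype V] [DecidableEq V] (G : SimpleGraph V)
    (v k l m : ℕ) (hsrg : G.IsSRGWith v k l m)
    (θ : ℝ) (hθ : IsSmallestEigenval (G.adjMatrix ℝ) θ)
    (hθ2 : θ < -2)
    (hint : ∃ (ρ : ℕ) (N : Matrix (Fin ρ) V ℤ), Nᵀ * N = G.adjMatrix ℤ + 3 • 1)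
    (hm : 10 ≤ m) :
    3 ∣ v ∧
      Nonempty (G ≃g SimpleGraph.completeMultipartiteGraph (fun _ : Fin (v / 3) => Fin 3)) := by
  obtain ⟨ρ, N, hN⟩ := hint
  have hM : G.IsNorm3Rep Nᵀ := by rwa [SimpleGraph.IsNorm3Rep, transpose_transpose]
  obtain ⟨x, hx, hAx⟩ := hθ.1
  have hcompl := hsrg.compl_is_regular
  have hvk : 2 ≤ v - k - 1 := by
    have := SimpleGraph.neg_add_one_le_of_compl_isRegularOfDegree hcompl hx hAx
    have : (1 : ℝ) < (v - k - 1 : ℕ) := by linarith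
    exact_mod_cast this
  have hG : G ≠ ⊤ := by
    obtain ⟨u⟩ : Nonempty V := not_isEmpty_iff.1 fun _ => hx (Subsingleton.elim _ _)
    obtain ⟨w, hw⟩ := (Gᶜ.degree_pos_iff_exists_adj u).1 (by rw [hcompl u]; omega)
    rintro rfl
    simp at hw
  obtain ⟨s, c, hc, hcol⟩ := hM.exists_forall_apply_eq hsrg hm hG
  have hv : v = k + 3 := by
    have := hsrg.card ▸ hM.card_le_add_three hsrg.regular hc hcol
    omega
  have := (hsrg.isCompleteMultipartite hv (by omega)).dvd_and_nonempty_iso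
    (fun x => by rw [hsrg.natCard_not_adj x]; omega) three_pos
  rwa [Nat.card_eq_fintype_card, hsrg.card] at this

open scoped Classical in
/-- An integrable strongly regular graph with smallest eigenvalue in `[-3,-2)` and `μ ≥ 10`
is the complete multipartite graph `K_{(v/3)×3}`. -/
theorem stmt_0 {V : Type} [Fintype V] [DecidableEq V] (G : SimpleGraph V)
    (v k l m : ℕ) (hsrg : G.IsSRGWith v k l m)
    (θ : ℝ) (hθ : IsSmallestEigenval (G.adjMatrix ℝ) θ)
    (hθ1 : -3 ≤ θ) (hθ2 : θ < -2)
    (hint : ∃ (ρ : ℕ) (N : Matrix (Fin ρ) V ℤ), Nᵀ * N = G.adjMatrix ℤ + 3 • 1)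
    (hm : 10 ≤ m) :
    3 ∣ v ∧
      Nonempty (G ≃g SimpleGraph.completeMultipartiteGraph (fun _ : Fin (v / 3) => Fin 3)) :=
  stmt_0_general G v k l m hsrg θ hθ hθ2 hint hm
end

section
/- No strongly regular graph with parameters (56,45,36,36) is integrable: there is no matrix N with integer entries such that NᵀN = A(G) + 3·I. -/
open Matrix

section aux

private lemma intSqLeOne (x : ℤ) (h : x * x ≤ 3) : x * x ≤ 1 := by
  have h1 : -1 ≤ x := by
    by_contra hx
    push_neg at hx
    have hx2 : x ≤ -2 := by omega
    nlinarith [mul_nonneg (by linarith : (0:ℤ) ≤ -x - 2) (by linarith : (0:ℤ) ≤ -x)]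
  have h2 : x ≤ 1 := by
    by_contra hx
    push_neg at hx
    have hx2 : 2 ≤ x := by omega
    nlinarith [mul_nonneg (by linarith : (0:ℤ) ≤ x - 2) (by linarith : (0:ℤ) ≤ x)]
  nlinarith [mul_nonneg (by linarith : (0:ℤ) ≤ 1 - x) (by linarith : (0:ℤ) ≤ x + 1)]

private lemma intAbsLeMulSelf (x : ℤ) : |x| ≤ x * x := by
  rcases eq_or_ne x 0 with rfl | hx
  · simp
  · have h1 : 1 ≤ |x| := Int.one_le_abs hx
    calc |x| = 1 * |x| := (one_mul _).symm
    _ ≤ |x| * |x| := by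
        exact mul_le_mul_of_nonneg_right h1 (abs_nonneg x)
    _ = x * x := abs_mul_abs_self x

end aux

open scoped Classical in
/-- No strongly regular graph with parameters (56,45,36,36) (the complement of the
Sims-Gewirtz graph) is integrable. -/
theorem stmt_2 {V : Type} [Fintype V] [DecidableEq V] (G : SimpleGraph V)
    (hsrg : G.IsSRGWith 56 45 36 36) :
    ¬ ∃ (ρ : ℕ) (N : Matrix (Fin ρ) V ℤ), Nᵀ * N = G.adjMatrix ℤ + 3 • 1 := by
  rintro ⟨ρ, N, hN⟩
  have hcard : Fintype.card V = 56 := hsrg.card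
  set A : Matrix V V ℤ := G.adjMatrix ℤ with hAdef
  set J : Matrix V V ℤ := Matrix.of (fun _ _ => (1:ℤ)) with hJdef
  set B : Matrix V V ℤ := A + (3:ℤ) • 1 with hBdef
  have hNB : Nᵀ * N = B := by
    rw [hN, hBdef]
    congr 1
    all_goals simp only [← Nat.cast_smul_eq_nsmul ℤ, Nat.cast_ofNat]
  -- basic matrix identities
  have hJt : Jᵀ = J := by
    ext i j; rfl
  have hAt : Aᵀ = A := G.transpose_adjMatrix
  have hBt : Bᵀ = B := by
    rw [hBdef, transpose_add, transpose_smul, transpose_one, hAt]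
  have hcompl : Gᶜ.adjMatrix ℤ = J - 1 - A := by
    ext u v
    by_cases h1 : u = v
    · subst h1
      simp [hJdef, hAdef, Matrix.sub_apply]
    · by_cases h2 : G.Adj u v
      · simp [hJdef, hAdef, Matrix.sub_apply, SimpleGraph.compl_adj, h1, h2,
          Matrix.one_apply_ne h1]
      · simp [hJdef, hAdef, Matrix.sub_apply, SimpleGraph.compl_adj, h1, h2,
          Matrix.one_apply_ne h1]
  have hA2 : A * A = (9:ℤ) • 1 + (36:ℤ) • J := by
    have h := hsrg.matrix_eq (α := ℤ)
    rw [pow_two, hcompl] at h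
    simp only [← Nat.cast_smul_eq_nsmul ℤ, Nat.cast_ofNat] at h
    rw [← hAdef] at h
    rw [h]
    module
  have hAJ : A * J = (45:ℤ) • J := by
    ext u v
    rw [hAdef]
    rw [SimpleGraph.adjMatrix_mul_apply]
    simp [hJdef, (hsrg.regular u)]
  have hJA : J * A = (45:ℤ) • J := by
    have h := congrArg Matrix.transpose hAJ
    rwa [transpose_mul, transpose_smul, hJt, hAt] at h
  have hJJ : J * J = (56:ℤ) • J := by
    ext u v
    simp [hJdef, Matrix.mul_apply, hcard]
  have hBJ : B * J = (48:ℤ) • J := by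
    rw [hBdef, add_mul, smul_mul_assoc, one_mul, hAJ]
    module
  have hJB : J * B = (48:ℤ) • J := by
    rw [hBdef, mul_add, mul_smul_comm, mul_one, hJA]
    module
  have hB2 : B * B = (6:ℤ) • B + (36:ℤ) • J := by
    have e : B * B = A * A + (6:ℤ) • A + (9:ℤ) • 1 := by
      rw [hBdef]
      simp only [add_mul, mul_add, mul_smul_comm, smul_mul_assoc, mul_one, one_mul]
      module
    rw [hA2] at e
    rw [e, hBdef]
    module
  -- the magic matrix H with H * B = 0
  set H : Matrix V V ℤ := (4:ℤ) • B - (24:ℤ) • 1 - (3:ℤ) • J with hHdef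
  have hHt : Hᵀ = H := by
    rw [hHdef, transpose_sub, transpose_sub, transpose_smul, transpose_smul, transpose_smul,
      transpose_one, hBt, hJt]
  have hHB : H * B = 0 := by
    have e : H * B = (4:ℤ) • (B * B) - (24:ℤ) • B - (3:ℤ) • (J * B) := by
      rw [hHdef]
      simp only [sub_mul, smul_mul_assoc, one_mul]
    rw [hB2, hJB] at e
    rw [e]
    module
  have hBH : B * H = 0 := by
    have h := congrArg Matrix.transpose hHB
    rwa [transpose_mul, hHt, hBt, transpose_zero] at h
  -- sandwich lemma
  have sandwich : ∀ X Y : Matrix V V ℤ,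
      (N * X * Nᵀ) * (N * Y * Nᵀ) = N * (X * B * Y) * Nᵀ := by
    intro X Y
    have e1 : (N * X * Nᵀ) * (N * Y * Nᵀ) = N * X * (Nᵀ * N) * (Y * Nᵀ) := by
      simp only [Matrix.mul_assoc]
    rw [e1, hNB]
    simp only [Matrix.mul_assoc]
  -- K = N H Nᵀ is zero
  set K : Matrix (Fin ρ) (Fin ρ) ℤ := N * H * Nᵀ with hKdef
  have hKK : K * K = 0 := by
    rw [hKdef, sandwich H H]
    rw [hHB, Matrix.zero_mul, Matrix.mul_zero, Matrix.zero_mul]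
  have hKt : Kᵀ = K := by
    rw [hKdef, transpose_mul, transpose_mul, transpose_transpose, hHt]
    simp only [Matrix.mul_assoc]
  have hK0 : K = 0 := by
    ext i j
    have hrow : ∑ l, K i l * K i l = 0 := by
      have h := congrFun (congrFun hKK i) i
      rw [Matrix.mul_apply, Matrix.zero_apply] at h
      calc ∑ l, K i l * K i l = ∑ l, K i l * K l i := by
            refine Finset.sum_congr rfl fun l _ => ?_
            have : K l i = Kᵀ i l := rfl
            rw [this, hKt]
      _ = 0 := h
    have hz : K i j * K i j = 0 := by
      have := (Finset.sum_eq_zero_iff_of_nonneg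
        (fun l _ => mul_self_nonneg (K i l))).mp hrow j (Finset.mem_univ j)
      exact this
    have := mul_self_eq_zero.mp hz
    simpa using this
  -- M and W
  set M : Matrix (Fin ρ) (Fin ρ) ℤ := N * Nᵀ with hMdef
  set W : Matrix (Fin ρ) (Fin ρ) ℤ := N * J * Nᵀ with hWdef
  have hMone : M = N * (1:Matrix V V ℤ) * Nᵀ := by rw [Matrix.mul_one]
  have hMM : M * M = N * B * Nᵀ := by
    rw [hMone, sandwich]
    rw [Matrix.one_mul, Matrix.mul_one]
  have hMMeq : (4:ℤ) • (M * M) = (24:ℤ) • M + (3:ℤ) • W := by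
    have e : N * H * Nᵀ = (4:ℤ) • (N * B * Nᵀ) - (24:ℤ) • (N * Nᵀ) - (3:ℤ) • (N * J * Nᵀ) := by
      rw [hHdef]
      simp only [Matrix.mul_sub, Matrix.sub_mul, Matrix.mul_smul, Matrix.smul_mul,
        Matrix.mul_one]
    rw [← hKdef] at e
    rw [hK0] at e
    have e2 : (4:ℤ) • (N * B * Nᵀ) = (24:ℤ) • M + (3:ℤ) • W := by
      rw [hMdef, hWdef]
      linear_combination (norm := module) (-1 : ℤ) • e
    rw [hMM]
    exact e2
  have hMW : M * W = (48:ℤ) • W := by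
    rw [hMone, hWdef, sandwich]
    rw [Matrix.one_mul, hBJ]
    simp only [Matrix.mul_smul, Matrix.smul_mul]
  have hWM : W * M = (48:ℤ) • W := by
    rw [hMone, hWdef, sandwich]
    rw [Matrix.mul_one, hJB]
    simp only [Matrix.mul_smul, Matrix.smul_mul]
  have hWW : W * W = (2688:ℤ) • W := by
    rw [hWdef, sandwich]
    have e : J * B * J = (2688:ℤ) • J := by
      rw [hJB, smul_mul_assoc, hJJ, smul_smul]
      norm_num
    rw [e]
    simp only [Matrix.mul_smul, Matrix.smul_mul]
  -- the PSD certificate F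
  set F : Matrix (Fin ρ) (Fin ρ) ℤ :=
    (1536:ℤ) • (1 : Matrix (Fin ρ) (Fin ρ) ℤ) + (4:ℤ) • W - (256:ℤ) • M with hFdef
  have hFF : F * F = (1536:ℤ) • F := by
    rw [hFdef]
    simp only [add_mul, sub_mul, mul_add, mul_sub, smul_mul_assoc, mul_smul_comm,
      Matrix.one_mul, Matrix.mul_one]
    linear_combination (norm := module) (16384:ℤ) • hMMeq + (16:ℤ) • hWW
      - (1024:ℤ) • hMW - (1024:ℤ) • hWM
  have hMt : Mᵀ = M := by
    rw [hMdef, transpose_mul, transpose_transpose]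
  have hWt : Wᵀ = W := by
    rw [hWdef, transpose_mul, transpose_mul, transpose_transpose, hJt]
    simp only [Matrix.mul_assoc]
  have hFt : Fᵀ = F := by
    rw [hFdef, transpose_sub, transpose_add, transpose_smul, transpose_smul, transpose_smul,
      transpose_one, hMt, hWt]
  -- F has nonnegative diagonal
  have hFdiag : ∀ q, (0:ℤ) ≤ F q q := by
    intro q
    have h := congrFun (congrFun hFF q) q
    rw [Matrix.mul_apply, Matrix.smul_apply, smul_eq_mul] at h
    have hsum : ∑ l, F q l * F l q = ∑ l, F q l * F q l := by
      refine Finset.sum_congr rfl fun l _ => ?_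
      have : F l q = Fᵀ q l := rfl
      rw [this, hFt]
    rw [hsum] at h
    have hnn : (0:ℤ) ≤ ∑ l, F q l * F q l :=
      Finset.sum_nonneg fun l _ => mul_self_nonneg _
    nlinarith [h, hnn]
  -- row statistics
  set n : Fin ρ → ℤ := fun q => ∑ v, N q v * N q v with hndef
  set s : Fin ρ → ℤ := fun q => ∑ v, N q v with hsdef
  have hcol : ∀ v : V, ∑ q, N q v * N q v = 3 := by
    intro v
    have h := congrFun (congrFun hNB v) v
    rw [Matrix.mul_apply] at h
    have hrhs : B v v = 3 := by
      have hA00 : A v v = 0 := by simp [hAdef]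
      rw [hBdef, Matrix.add_apply, Matrix.smul_apply, Matrix.one_apply_eq, hA00]
      norm_num
    rw [hrhs] at h
    calc ∑ q, N q v * N q v = ∑ q, Nᵀ v q * N q v := by
          refine Finset.sum_congr rfl fun q _ => ?_
          rfl
    _ = 3 := h
  have hsq1 : ∀ q v, N q v * N q v ≤ 1 := by
    intro q v
    apply intSqLeOne
    calc N q v * N q v ≤ ∑ p, N p v * N p v :=
          Finset.single_le_sum (f := fun p => N p v * N p v)
            (fun p _ => mul_self_nonneg _) (Finset.mem_univ q)
    _ = 3 := hcol v
  have hn_nonneg : ∀ q, 0 ≤ n q := fun q =>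
    Finset.sum_nonneg fun v _ => mul_self_nonneg _
  have hn56 : ∀ q, n q ≤ 56 := by
    intro q
    calc n q = ∑ v, N q v * N q v := rfl
    _ ≤ ∑ _v : V, (1:ℤ) := Finset.sum_le_sum fun v _ => hsq1 q v
    _ = 56 := by simp [hcard]
  have habs : ∀ q, |s q| ≤ n q := by
    intro q
    calc |s q| = |∑ v, N q v| := rfl
    _ ≤ ∑ v, |N q v| := Finset.abs_sum_le_sum_abs _ _
    _ ≤ ∑ v, N q v * N q v := Finset.sum_le_sum fun v _ => intAbsLeMulSelf _
    _ = n q := rfl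
  -- diagonal entries of M and W
  have hMqq : ∀ q, M q q = n q := by
    intro q
    rw [hMdef, Matrix.mul_apply]
    rfl
  have hWqq : ∀ q, W q q = s q * s q := by
    intro q
    rw [hWdef, Matrix.mul_apply]
    have e : ∀ u, (N * J) q u = s q := by
      intro u
      rw [Matrix.mul_apply]
      simp [hJdef, hsdef]
    calc ∑ u, (N * J) q u * Nᵀ u q = ∑ u, s q * N q u := by
          refine Finset.sum_congr rfl fun u _ => ?_
          rw [e u]
          rfl
    _ = s q * ∑ u, N q u := by rw [Finset.mul_sum]
    _ = s q * s q := rfl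
  -- the key inequality : 256 * n q ≤ 1536 + 4 * (s q * s q)
  have hkey : ∀ q, 256 * n q ≤ 1536 + 4 * (s q * s q) := by
    intro q
    have h := hFdiag q
    rw [hFdef] at h
    simp only [Matrix.sub_apply, Matrix.add_apply, Matrix.smul_apply, smul_eq_mul,
      Matrix.one_apply_eq] at h
    rw [hMqq, hWqq] at h
    linarith
  -- hence every n q ≤ 6
  have hn6 : ∀ q, n q ≤ 6 := by
    intro q
    by_contra hq
    push_neg at hq
    have h7 : 7 ≤ n q := hq
    have hss : s q * s q ≤ n q * n q := by
      have h1 : |s q| * |s q| ≤ n q * n q :=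
        mul_le_mul (habs q) (habs q) (abs_nonneg _) (le_trans (abs_nonneg _) (habs q))
      rwa [abs_mul_abs_self] at h1
    have hk := hkey q
    have h56 := hn56 q
    nlinarith [mul_nonneg (by linarith : (0:ℤ) ≤ n q - 7) (by linarith : (0:ℤ) ≤ 56 - n q)]
  -- global counting
  have hsumn : ∑ q, n q = 168 := by
    calc ∑ q, n q = ∑ q, ∑ v, N q v * N q v := rfl
    _ = ∑ v, ∑ q, N q v * N q v := Finset.sum_comm
    _ = ∑ _v : V, (3:ℤ) := Finset.sum_congr rfl fun v _ => hcol v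
    _ = 168 := by simp [hcard]
  have hBrow : ∀ v, ∑ u, B v u = 48 := by
    intro v
    have h45 : ∑ u, A v u = 45 := by
      have h := SimpleGraph.adjMatrix_mulVec_const_apply_of_regular (α := ℤ)
        (a := (1:ℤ)) (hsrg.regular) (v := v)
      rw [Matrix.mulVec, dotProduct] at h
      simpa [hAdef] using h
    have h3 : ∑ u, ((3:ℤ) • (1:Matrix V V ℤ)) v u = 3 := by
      simp [Matrix.smul_apply, Matrix.one_apply]
    calc ∑ u, B v u = ∑ u, (A v u + ((3:ℤ) • (1:Matrix V V ℤ)) v u) := by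
          refine Finset.sum_congr rfl fun u _ => ?_
          rw [hBdef]
          rfl
    _ = (∑ u, A v u) + ∑ u, ((3:ℤ) • (1:Matrix V V ℤ)) v u := Finset.sum_add_distrib
    _ = 48 := by rw [h45, h3]; norm_num
  have hsums : ∑ q, s q * s q = 2688 := by
    have e1 : ∀ q, s q * s q = ∑ v, ∑ u, N q v * N q u := by
      intro q
      rw [hsdef]
      simp only
      rw [Finset.sum_mul_sum]
    have e2 : ∀ v u, ∑ q, N q v * N q u = B v u := by
      intro v u
      have h := congrFun (congrFun hNB v) u
      rw [Matrix.mul_apply] at h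
      calc ∑ q, N q v * N q u = ∑ q, Nᵀ v q * N q u := by
            refine Finset.sum_congr rfl fun q _ => ?_
            rfl
      _ = B v u := h
    calc ∑ q, s q * s q = ∑ q, ∑ v, ∑ u, N q v * N q u :=
          Finset.sum_congr rfl fun q _ => e1 q
    _ = ∑ v, ∑ q, ∑ u, N q v * N q u := Finset.sum_comm
    _ = ∑ v, ∑ u, ∑ q, N q v * N q u := Finset.sum_congr rfl fun v _ => Finset.sum_comm
    _ = ∑ v, ∑ u, B v u := by
          refine Finset.sum_congr rfl fun v _ => Finset.sum_congr rfl fun u _ => e2 v u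
    _ = ∑ _v : V, (48:ℤ) := Finset.sum_congr rfl fun v _ => hBrow v
    _ = 2688 := by simp [hcard]
  -- final contradiction
  have hfin1 : (2688:ℤ) ≤ ∑ q, n q * n q := by
    rw [← hsums]
    refine Finset.sum_le_sum fun q _ => ?_
    have h1 : |s q| * |s q| ≤ n q * n q :=
      mul_le_mul (habs q) (habs q) (abs_nonneg _) (le_trans (abs_nonneg _) (habs q))
    rwa [abs_mul_abs_self] at h1
  have hfin2 : ∑ q, n q * n q ≤ 1008 := by
    calc ∑ q, n q * n q ≤ ∑ q, 6 * n q := by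
          refine Finset.sum_le_sum fun q _ => ?_
          exact mul_le_mul_of_nonneg_right (hn6 q) (hn_nonneg q)
    _ = 6 * ∑ q, n q := by rw [Finset.mul_sum]
    _ = 1008 := by rw [hsumn]; norm_num
  linarith
end

section
/- For all positive integers n and t, the complete multipartite graph K_{n×t} with n parts each of size t is integrable with respect to norm t: there exists a matrix N with integer entries, with nt columns indexed by the vertices, such that NᵀN = A(K_{n×t}) + t·I. -/
/-!
Stack the all-ones row on top of the block-diagonal matrix whose `n` blocks are the oriented
incidence matrix `D` of `K_t`. The all-ones row contributes the all-ones matrix `J`, and each block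
contributes `DᵀD`, the Laplacian `t • 1 - J_t` of `K_t`. Hence the Gram matrix is
`J - diag(J_t, …, J_t) + t • 1 = A(K_{n×t}) + t • 1`.
-/

open Matrix Finset

namespace SimpleGraph

variable {V : Type*} [Fintype V] (G : SimpleGraph V) [DecidableRel G.Adj]

theorem two_mul_dotProduct_lapMatrix_mulVec [DecidableEq V] {R : Type*} [CommRing R]
    (x y : V → R) :
    2 * (x ⬝ᵥ (G.lapMatrix R *ᵥ y)) =
      ∑ a, ∑ b, if G.Adj a b then (x a - x b) * (y a - y b) else 0 := by
  have hswap (f : V → V → R) : ∑ a, ∑ b, (if G.Adj a b then f a b else 0) =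
      ∑ a, ∑ b, if G.Adj a b then f b a else 0 := by
    rw [sum_comm]
    simp_rw [G.adj_comm]
  have hexpand (a b : V) : (if G.Adj a b then (x a - x b) * (y a - y b) else 0) =
      (if G.Adj a b then x a * y a else 0) - (if G.Adj a b then x a * y b else 0)
      - (if G.Adj a b then x b * y a else 0) + (if G.Adj a b then x b * y b else 0) := by
    split_ifs <;> ring
  have hdeg : x ⬝ᵥ (G.degMatrix R *ᵥ y) = ∑ a, ∑ b, if G.Adj a b then x a * y a else 0 := by
    simp_rw [dotProduct, degMatrix_mulVec_apply, degree_eq_sum_if_adj, sum_mul, mul_sum, ite_mul,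
      mul_ite, one_mul, zero_mul, mul_zero]
  simp_rw [hexpand, sum_add_distrib, sum_sub_distrib]
  rw [hswap fun a b => x b * y a, hswap fun a b => x b * y b, lapMatrix, sub_mulVec,
    dotProduct_sub, dotProduct_mulVec_adjMatrix, hdeg]
  ring

theorem lapMatrix_top {α : Type*} [Fintype α] [DecidableEq α] {R : Type*} [Ring R] :
    (⊤ : SimpleGraph α).lapMatrix R = (Fintype.card α : R) • 1 - of fun _ _ => 1 := by
  ext a b
  rcases eq_or_ne a b with rfl | hab
  · have : 1 ≤ Fintype.card α := Fintype.card_pos_iff.mpr ⟨a⟩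
    simp [lapMatrix, degMatrix, Nat.cast_sub this]
  · simp [lapMatrix, degMatrix, hab]

variable [LinearOrder V]

def orientedIncMatrix : Matrix (V × V) V ℤ :=
  of fun p => if p.1 < p.2 ∧ G.Adj p.1 p.2 then (Pi.single p.1 1 - Pi.single p.2 1 : V → ℤ) else 0

theorem orientedIncMatrix_transpose_mul_self :
    G.orientedIncMatrixᵀ * G.orientedIncMatrix = G.lapMatrix ℤ := by
  ext j j'
  set x : V → ℤ := Pi.single j 1 with hx
  set y : V → ℤ := Pi.single j' 1 with hy
  set g : V → V → ℤ := fun a b => if G.Adj a b then (x a - x b) * (y a - y b) else 0 with hg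
  have hgram : (G.orientedIncMatrixᵀ * G.orientedIncMatrix) j j' =
      ∑ a, ∑ b, if a < b then g a b else 0 := by
    rw [mul_apply, Fintype.sum_prod_type]
    refine sum_congr rfl fun a _ => sum_congr rfl fun b _ => ?_
    simp only [transpose_apply, orientedIncMatrix, of_apply, hg, hx, hy, Pi.single_comm j,
      Pi.single_comm j']
    split_ifs <;> simp_all
  have hswap : ∑ a, ∑ b, (if a < b then g a b else 0) = ∑ a, ∑ b, if b < a then g a b else 0 := by
    rw [sum_comm]
    refine sum_congr rfl fun a _ => sum_congr rfl fun b _ => ?_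
    simp only [hg, G.adj_comm a b]
    split_ifs <;> ring
  -- `g` is symmetric and vanishes on the diagonal, so the sum over `a < b` is half the full sum.
  have hsplit : ∑ a, ∑ b, g a b =
      ∑ a, ∑ b, ((if a < b then g a b else 0) + if b < a then g a b else 0) := by
    refine sum_congr rfl fun a _ => sum_congr rfl fun b _ => ?_
    rcases lt_trichotomy a b with h | rfl | h
    · simp [h, h.not_gt]
    · simp [hg]
    · simp [h, h.not_gt]
  have hall : ∑ a, ∑ b, g a b = 2 * G.lapMatrix ℤ j j' := by
    have h := G.two_mul_dotProduct_lapMatrix_mulVec x y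
    rw [hy, mulVec_single_one, hx, single_one_dotProduct] at h
    exact h.symm
  simp only [sum_add_distrib] at hsplit
  linarith

theorem exists_transpose_mul_self_eq_adjMatrix_completeMultipartiteGraph_add
    (ι α : Type*) [Fintype ι] [DecidableEq ι] [Fintype α] [LinearOrder α]
    [DecidableRel (completeMultipartiteGraph fun _ : ι => α).Adj] :
    ∃ N : Matrix (Unit ⊕ Σ _ : ι, α × α) (Σ _ : ι, α) ℤ,
      Nᵀ * N = (completeMultipartiteGraph fun _ : ι => α).adjMatrix ℤ
        + (Fintype.card α : ℤ) • 1 := by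
  refine ⟨fromRows (of fun _ _ => 1)
    (blockDiagonal' fun _ => (⊤ : SimpleGraph α).orientedIncMatrix), ?_⟩
  rw [transpose_fromRows, fromCols_mul_fromRows, blockDiagonal'_transpose, ← blockDiagonal'_mul,
    orientedIncMatrix_transpose_mul_self, lapMatrix_top]
  ext ⟨i, a⟩ ⟨i', b⟩
  rcases eq_or_ne i i' with rfl | hii
  · rcases eq_or_ne a b with rfl | hab
    · simp [mul_apply, Matrix.natCast_apply]
    · simp [mul_apply, Matrix.natCast_apply, hab]
  · simp [mul_apply, Matrix.natCast_apply, hii, blockDiagonal'_apply_ne]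

end SimpleGraph

theorem Matrix.exists_fin_transpose_mul_self_eq {m n R : Type*} [Fintype m]
    [NonUnitalNonAssocSemiring R] (N : Matrix m n R) :
    ∃ (ρ : ℕ) (N' : Matrix (Fin ρ) n R), N'ᵀ * N' = Nᵀ * N :=
  ⟨_, N.submatrix (Fintype.equivFin m).symm id, by
    rw [transpose_submatrix, submatrix_mul_equiv, submatrix_id_id]⟩

open scoped Classical in
theorem stmt_8_general (n t : ℕ) :
    ∃ (ρ : ℕ) (N : Matrix (Fin ρ) ((_ : Fin n) × Fin t) ℤ),
      Nᵀ * N =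
        (SimpleGraph.completeMultipartiteGraph (fun _ : Fin n => Fin t)).adjMatrix ℤ
          + (t : ℤ) • 1 := by
  obtain ⟨N, hN⟩ :=
    SimpleGraph.exists_transpose_mul_self_eq_adjMatrix_completeMultipartiteGraph_add (Fin n) (Fin t)
  rw [Fintype.card_fin] at hN
  exact hN ▸ N.exists_fin_transpose_mul_self_eq

open scoped Classical in
/-- The complete multipartite graph `K_{n×t}` with `n` parts of size `t` is integrable
with respect to norm `t`. -/
theorem stmt_8 (n t : ℕ) (hn : 0 < n) (ht : 0 < t) :
    ∃ (ρ : ℕ) (N : Matrix (Fin ρ) ((_ : Fin n) × Fin t) ℤ),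
      Nᵀ * N =
        (SimpleGraph.completeMultipartiteGraph (fun _ : Fin n => Fin t)).adjMatrix ℤ
          + (t : ℤ) • 1 :=
  stmt_8_general n t
end

section
/- Let G be a finite simple graph on vertex set V whose smallest eigenvalue θ is an integer. Let V_1,…,V_p be a partition of V that is equitable: there is a p × p matrix Q such that for all i,j, every vertex x ∈ V_i has exactly Q_{i,j} neighbors in V_j. Let u ∈ ℝ^p be an eigenvector of Q with eigenvalue θ, i.e. Q·u = θ·u. Let s be a positive integer and let N be a matrix with integer entries and columns indexed by V satisfying NᵀN = s·(A(G) − θ·I). Then for every row r of N one has Σ_{i=1}^{p} u_i · (Σ_{x ∈ V_i} r_x) = 0. -/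
open Matrix

open scoped Classical in
/-- If the smallest eigenvalue `θ` of `G` is an integer, `V₁,…,V_p` is an equitable partition
with quotient matrix `Q`, `u` is a `θ`-eigenvector of `Q`, and `NᵀN = s(A(G) - θ I)` with `N`
integral, then every row `r` of `N` satisfies `∑ᵢ uᵢ ∑_{x ∈ Vᵢ} r_x = 0`. -/
theorem stmt_10 {V : Type} [Fintype V] [DecidableEq V] (G : SimpleGraph V)
    (θ : ℝ) (hθ : IsSmallestEigenval (G.adjMatrix ℝ) θ) (hθint : ∃ z : ℤ, θ = (z : ℝ))
    (p : ℕ) (P : Fin p → Finset V)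
    (hdisj : ∀ i j : Fin p, i ≠ j → Disjoint (P i) (P j))
    (hcover : ∀ x : V, ∃ i : Fin p, x ∈ P i)
    (Q : Matrix (Fin p) (Fin p) ℝ)
    (hequit : ∀ i j : Fin p, ∀ x ∈ P i, (((P j).filter fun y => G.Adj x y).card : ℝ) = Q i j)
    (u : Fin p → ℝ) (hu : Q.mulVec u = θ • u)
    (s : ℕ) (hs : 0 < s)
    {ι : Type} [Fintype ι] (N : Matrix ι V ℤ)
    (hN : (N.map (Int.cast : ℤ → ℝ))ᵀ * N.map (Int.cast : ℤ → ℝ)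
        = (s : ℝ) • (G.adjMatrix ℝ - θ • 1)) :
    ∀ i : ι, ∑ j : Fin p, u j * ∑ x ∈ P j, (N i x : ℝ) = 0 := by
  classical
  -- the part containing `x`
  set f : V → Fin p := fun x => Classical.choose (hcover x) with hfdef
  have hf : ∀ x : V, x ∈ P (f x) := fun x => Classical.choose_spec (hcover x)
  have hmem : ∀ x j, x ∈ P j → f x = j := by
    intro x j hx
    by_contra h
    exact Finset.disjoint_left.mp (hdisj _ _ h) (hf x) hx
  have hPj : ∀ j, P j = Finset.univ.filter fun y => f y = j := by
    intro j; ext y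
    simp only [Finset.mem_filter, Finset.mem_univ, true_and]
    exact ⟨hmem y j, fun h => h ▸ hf y⟩
  set v : V → ℝ := fun x => u (f x) with hv
  -- v is a θ-eigenvector of the adjacency matrix
  have hAv : (G.adjMatrix ℝ).mulVec v = θ • v := by
    funext x
    have key : (G.adjMatrix ℝ).mulVec v x = ∑ j : Fin p, Q (f x) j * u j := by
      simp only [Matrix.mulVec, dotProduct, SimpleGraph.adjMatrix_apply]
      rw [← Finset.sum_fiberwise Finset.univ f
        (fun y => (if G.Adj x y then (1:ℝ) else 0) * v y)]
      refine Finset.sum_congr rfl fun j _ => ?_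
      rw [← hequit (f x) j x (hf x), ← hPj j]
      calc ∑ y ∈ P j, (if G.Adj x y then (1:ℝ) else 0) * v y
          = ∑ y ∈ P j, (if G.Adj x y then (1:ℝ) else 0) * u j := by
            refine Finset.sum_congr rfl fun y hy => ?_
            have hfy : f y = j := hmem y j hy
            simp [v, hfy]
        _ = (∑ y ∈ P j, (if G.Adj x y then (1:ℝ) else 0)) * u j := by
            rw [Finset.sum_mul]
        _ = ((P j).filter fun y => G.Adj x y).card * u j := by
            rw [Finset.sum_boole]
    rw [key]
    have := congrFun hu (f x)
    simp only [Matrix.mulVec, dotProduct, Pi.smul_apply, smul_eq_mul] at this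
    simpa using this
  -- (A - θ I) v = 0
  have hMv : ((s : ℝ) • (G.adjMatrix ℝ - θ • 1)).mulVec v = 0 := by
    rw [Matrix.smul_mulVec, Matrix.sub_mulVec, hAv, Matrix.smul_mulVec,
      Matrix.one_mulVec, sub_self, smul_zero]
  -- N v = 0
  set Nr := N.map (Int.cast : ℤ → ℝ) with hNr
  have hw : Nr.mulVec v = 0 := by
    have h0 : v ⬝ᵥ (Nrᵀ * Nr).mulVec v = 0 := by
      rw [hN, hMv, dotProduct_zero]
    rw [← Matrix.mulVec_mulVec, Matrix.dotProduct_mulVec, Matrix.vecMul_transpose] at h0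
    funext i
    have hsum : ∑ k, Nr.mulVec v k * Nr.mulVec v k = 0 := h0
    have := (Finset.sum_eq_zero_iff_of_nonneg
      (fun k _ => mul_self_nonneg (Nr.mulVec v k))).mp hsum i (Finset.mem_univ i)
    exact mul_self_eq_zero.mp this
  intro i
  have hi : ∑ x : V, (N i x : ℝ) * v x = 0 := by
    have := congrFun hw i
    simpa [Matrix.mulVec, dotProduct, hNr, Matrix.map_apply] using this
  rw [← hi, ← Finset.sum_fiberwise Finset.univ f (fun x => (N i x : ℝ) * v x)]
  refine Finset.sum_congr rfl fun j _ => ?_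
  rw [← hPj j, Finset.mul_sum]
  refine Finset.sum_congr rfl fun x hx => ?_
  have hfx : f x = j := hmem x j hx
  simp [v, hfx, mul_comm]
end

section
/- Let G be a finite simple graph on vertex set V with smallest eigenvalue θ, let s be a positive integer, and let N be a matrix with integer entries and columns indexed by V satisfying NᵀN = s·(A(G) + ⌈−θ⌉·I). Then every row r of N satisfies Σ_{x∈V} r_x·(Σ_{y ~ x} r_y) ≥ (1/s)·(Σ_{x∈V} r_x²)² + ⌊θ⌋·(Σ_{x∈V} r_x²), where the inner sum is over the neighbors y of x; equivalently, r·A(G)·rᵀ ≥ (1/s)(r·rᵀ)² + ⌊θ⌋·(r·rᵀ). -/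
open Matrix

open scoped Classical in
/-- If `NᵀN = s(A(G) + ⌈-θ⌉ I)` with `N` integral, then every row `r` of `N` satisfies
`∑_x r_x ∑_{y ~ x} r_y ≥ (1/s)(r rᵀ)² + ⌊θ⌋ (r rᵀ)`. -/
theorem stmt_11 {V : Type} [Fintype V] [DecidableEq V] (G : SimpleGraph V)
    (θ : ℝ) (hθ : IsSmallestEigenval (G.adjMatrix ℝ) θ)
    (s : ℕ) (hs : 0 < s)
    {ι : Type} [Fintype ι] (N : Matrix ι V ℤ)
    (hN : (N.map (Int.cast : ℤ → ℝ))ᵀ * N.map (Int.cast : ℤ → ℝ)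
        = (s : ℝ) • (G.adjMatrix ℝ + ((⌈-θ⌉ : ℤ) : ℝ) • 1)) :
    ∀ i : ι,
      ∑ x : V, (N i x : ℝ) * ∑ y ∈ G.neighborFinset x, (N i y : ℝ)
        ≥ (1 / (s : ℝ)) * (∑ x : V, (N i x : ℝ) ^ 2) ^ 2
            + ((⌊θ⌋ : ℤ) : ℝ) * ∑ x : V, (N i x : ℝ) ^ 2 := by
  intro i
  set M := N.map (Int.cast : ℤ → ℝ) with hM
  set B := M * Mᵀ with hB
  set Q := ∑ x : V, (N i x : ℝ)^2 with hQ
  set P := ∑ x : V, (N i x : ℝ) * ∑ y ∈ G.neighborFinset x, (N i y : ℝ) with hP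
  have hMentry : ∀ j x, M j x = (N j x : ℝ) := by intro j x; simp [hM]
  have hBii : B i i = Q := by
    simp [hB, Matrix.mul_apply, Matrix.transpose_apply, hMentry, hQ, sq]
  have hMAM : (M * G.adjMatrix ℝ * Mᵀ) i i = P := by
    rw [Matrix.mul_assoc]
    simp only [Matrix.mul_apply, Matrix.transpose_apply]
    rw [hP]
    refine Finset.sum_congr rfl fun x _ => ?_
    rw [hMentry]
    congr 1
    rw [SimpleGraph.neighborFinset_eq_filter, Finset.sum_filter]
    refine Finset.sum_congr rfl fun y _ => ?_
    by_cases h : G.Adj x y <;> simp [h, hMentry]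
  have key : (B * B) i i = s * (P + ((⌈-θ⌉ : ℤ) : ℝ) * Q) := by
    have h1 : B * B = (s : ℝ) • (M * G.adjMatrix ℝ * Mᵀ + ((⌈-θ⌉ : ℤ) : ℝ) • B) := by
      rw [hB]
      calc M * Mᵀ * (M * Mᵀ) = M * (Mᵀ * M) * Mᵀ := by
            rw [Matrix.mul_assoc, Matrix.mul_assoc, Matrix.mul_assoc]
        _ = _ := by
            rw [hN]
            rw [Matrix.mul_smul, Matrix.smul_mul]
            congr 1
            rw [Matrix.mul_add, Matrix.add_mul, Matrix.mul_smul, Matrix.mul_one,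
              Matrix.smul_mul]
    rw [h1]
    simp [Matrix.add_apply, hMAM, hBii, mul_add]
  have lower : Q^2 ≤ (B * B) i i := by
    have hsymm : ∀ j, B j i = B i j := by
      intro j
      simp [hB, Matrix.mul_apply, Matrix.transpose_apply, mul_comm]
    have h2 : (B * B) i i = ∑ j, (B i j)^2 := by
      rw [Matrix.mul_apply]
      exact Finset.sum_congr rfl fun j _ => by rw [hsymm j, sq]
    rw [h2, ← hBii]
    exact Finset.single_le_sum (f := fun j => (B i j)^2) (fun j _ => sq_nonneg _) (Finset.mem_univ i)
  rw [key] at lower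
  have hceil : ((⌈-θ⌉ : ℤ) : ℝ) = -((⌊θ⌋ : ℤ) : ℝ) := by
    rw [Int.ceil_neg]; push_cast; ring
  rw [hceil] at lower
  have hspos : (0:ℝ) < s := by exact_mod_cast hs
  rw [ge_iff_le, div_mul_eq_mul_div, one_mul, div_add' _ _ _ (ne_of_gt hspos),
    div_le_iff₀ hspos]
  nlinarith [lower]
end

section
/- Let G be a finite simple graph on vertex set V whose smallest eigenvalue lies in [−3,−2), and let N be a matrix with integer entries and columns indexed by V satisfying NᵀN = 2·A(G) + 6·I. Then for every row r of N, every independent set of G contained in the support {x ∈ V : r_x ≠ 0} has at most 6 vertices. -/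
open Matrix

private lemma ite_ite_swap {p q : Prop} [Decidable p] [Decidable q] (a : ℤ) :
    (if p then if q then a else 0 else 0) = if q then if p then a else 0 else 0 := by
  split_ifs <;> rfl

private lemma sign_mul_self_ge_one {a : ℤ} (ha : a ≠ 0) : 1 ≤ a.sign * a := by
  rcases lt_trichotomy a 0 with h | h | h
  · rw [Int.sign_eq_neg_one_of_neg h]; omega
  · exact absurd h ha
  · rw [Int.sign_eq_one_of_pos h]; omega

open scoped Classical in
/-- If `G` has smallest eigenvalue in `[-3,-2)` and `NᵀN = 2A(G) + 6I` with `N` integral, then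
for every row `r` of `N`, every coclique of `G` inside the support of `r` has at most
`6` vertices. -/
theorem stmt_13 {V : Type} [Fintype V] [DecidableEq V] (G : SimpleGraph V)
    (θ : ℝ) (hθ : IsSmallestEigenval (G.adjMatrix ℝ) θ)
    (hθ1 : -3 ≤ θ) (hθ2 : θ < -2)
    {ι : Type} [Fintype ι] (N : Matrix ι V ℤ)
    (hN : Nᵀ * N = 2 • G.adjMatrix ℤ + 6 • 1) :
    ∀ i : ι, ∀ S : Finset V, ((S : Set V).Pairwise fun x y => ¬G.Adj x y) →
      (∀ x ∈ S, N i x ≠ 0) → S.card ≤ 6 := by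
  intro i S hS hsupp
  -- entrywise consequence of hN
  have h1 : ∀ x y : V, ∑ j, N j x * N j y
      = (if G.Adj x y then 2 else 0) + (if x = y then 6 else 0) := by
    intro x y
    have := congrFun (congrFun hN x) y
    simpa [Matrix.mul_apply, Matrix.transpose_apply, Matrix.add_apply, smul_eq_mul,
      ← Matrix.diagonal_ofNat, Matrix.diagonal_apply, SimpleGraph.adjMatrix_apply,
      mul_ite, ite_mul, ite_ite_swap, Finset.sum_ite_eq] using this
  have hdiag : ∀ x : V, ∑ j, N j x * N j x = 6 := by
    intro x; simpa [SimpleGraph.irrefl] using h1 x x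
  have hoff : ∀ x ∈ S, ∀ y ∈ S, x ≠ y → ∑ j, N j x * N j y = 0 := by
    intro x hx y hy hxy
    have hadj : ¬ G.Adj x y := hS hx hy hxy
    simp [h1 x y, hadj, hxy]
  set s : V → ℤ := fun x => (N i x).sign with hs
  set f : ι → ℤ := fun j => ∑ x ∈ S, s x * N j x with hf
  -- total squared norm
  have hnorm : ∑ j, f j ^ 2 = 6 * S.card := by
    have : ∀ j, f j ^ 2 = ∑ x ∈ S, ∑ y ∈ S, s x * s y * (N j x * N j y) := by
      intro j
      rw [hf, sq, Finset.sum_mul_sum]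
      apply Finset.sum_congr rfl; intro x _
      apply Finset.sum_congr rfl; intro y _
      ring
    rw [Finset.sum_congr rfl fun j _ => this j]
    rw [Finset.sum_comm]
    have : ∀ x ∈ S, ∑ j, ∑ y ∈ S, s x * s y * (N j x * N j y) = 6 := by
      intro x hx
      rw [Finset.sum_comm]
      have hx0 : N i x ≠ 0 := hsupp x hx
      have hsx : s x * s x = 1 := by
        simp only [hs]
        rcases lt_trichotomy (N i x) 0 with h | h | h
        · rw [Int.sign_eq_neg_one_of_neg h]; ring
        · exact absurd h hx0
        · rw [Int.sign_eq_one_of_pos h]; ring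
      calc ∑ y ∈ S, ∑ j, s x * s y * (N j x * N j y)
          = ∑ y ∈ S, s x * s y * ∑ j, N j x * N j y := by
            apply Finset.sum_congr rfl; intro y _; rw [Finset.mul_sum]
        _ = 6 := by
            rw [Finset.sum_eq_single x]
            · rw [hdiag x, hsx]; ring
            · intro y hy hyx
              rw [hoff x hx y hy (Ne.symm hyx), mul_zero]
            · intro h; exact absurd hx h
    calc ∑ x ∈ S, ∑ j, ∑ y ∈ S, s x * s y * (N j x * N j y)
        = ∑ x ∈ S, (6 : ℤ) := Finset.sum_congr rfl this
      _ = 6 * S.card := by rw [Finset.sum_const]; ring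
  -- i-th coordinate is large
  have hfi : (S.card : ℤ) ≤ f i := by
    rw [hf]
    calc (S.card : ℤ) = ∑ _x ∈ S, (1 : ℤ) := by rw [Finset.sum_const]; ring
      _ ≤ ∑ x ∈ S, s x * N i x := by
          apply Finset.sum_le_sum
          intro x hx
          exact sign_mul_self_ge_one (hsupp x hx)
  have hfi2 : (S.card : ℤ) ^ 2 ≤ f i ^ 2 := by
    have h0 : (0 : ℤ) ≤ (S.card : ℤ) := Int.natCast_nonneg _
    nlinarith
  have hle : f i ^ 2 ≤ ∑ j, f j ^ 2 :=
    Finset.single_le_sum (fun j _ => sq_nonneg (f j)) (Finset.mem_univ i)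
  have : (S.card : ℤ) ^ 2 ≤ 6 * S.card := by omega
  have hfin : (S.card : ℤ) ≤ 6 := by nlinarith [Int.natCast_nonneg S.card]
  exact_mod_cast hfin
end
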